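/- arXiv:2509.23962 — 3 statements merged into one kernel-verified Lean document; each statement's English description precedes it below -/
import Mathlib

section
/- Let G be a finite nonempty set partitioned into nonempty subsets C⁺ and C⁻ with possibly different cardinalities, and R : G → ℝ. If for every o ∈ G the DR.GRPO advantage R(o) − mean_G R equals ½(inter-group advantage of o) + ½(intra-group advantage of o), and the group means mean_{C⁺} R and mean_{C⁻} R are distinct, then |C⁺| = |C⁻|. -/
theorem stmt_1 {α : Type*} [DecidableEq α] (G Cp Cm : Finset α) (R : α → ℝ)
    (hU : Cp ∪ Cm = G) (hd : Disjoint Cp Cm)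
    (hp : Cp.Nonempty) (hm : Cm.Nonempty)
    (heq : ∀ o ∈ G,
      R o - (∑ x ∈ G, R x) / G.card =
        (1 / 2) * (if o ∈ Cp then R o - (∑ x ∈ Cm, R x) / Cm.card
                   else R o - (∑ x ∈ Cp, R x) / Cp.card)
        +
        (1 / 2) * (if o ∈ Cp then R o - (∑ x ∈ Cp, R x) / Cp.card
                   else R o - (∑ x ∈ Cm, R x) / Cm.card))
    (hne : (∑ x ∈ Cp, R x) / Cp.card ≠ (∑ x ∈ Cm, R x) / Cm.card) :
    Cp.card = Cm.card := by
  obtain ⟨o, ho⟩ := hp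
  have hoG : o ∈ G := hU ▸ Finset.mem_union_left _ ho
  have h := heq o hoG
  rw [if_pos ho, if_pos ho] at h
  have hsum : (∑ x ∈ G, R x) = (∑ x ∈ Cp, R x) + (∑ x ∈ Cm, R x) := by
    rw [← hU, Finset.sum_union hd]
  have hcard : G.card = Cp.card + Cm.card := by
    rw [← hU, Finset.card_union_of_disjoint hd]
  set A := (∑ x ∈ Cp, R x)
  set B := (∑ x ∈ Cm, R x)
  set p := (Cp.card : ℝ)
  set m := (Cm.card : ℝ)
  have hp0 : p ≠ 0 := Nat.cast_ne_zero.mpr (Finset.card_ne_zero_of_mem ho)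
  have hm0 : m ≠ 0 := Nat.cast_ne_zero.mpr (Finset.card_ne_zero_of_mem hm.choose_spec)
  have hpm0 : p + m ≠ 0 := by positivity
  have hGcard : (G.card : ℝ) = p + m := by rw [hcard]; push_cast; ring
  rw [hsum, hGcard] at h
  -- h : R o - (A + B)/(p+m) = ½(R o - B/m) + ½(R o - A/p)
  have key : (A + B) / (p + m) = (A / p + B / m) / 2 := by linarith
  by_contra hne'
  have hpm : p ≠ m := by
    intro hc
    exact hne' (Nat.cast_injective hc)
  apply hne
  have h2 : A * m * (p - m) = B * p * (p - m) := by
    field_simp at key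
    nlinarith [key]
  have h3 : A * m = B * p := by
    have := sub_ne_zero.mpr hpm
    have := mul_right_cancel₀ this h2
    exact this
  field_simp
  linarith [h3]
end

section
/- Let λ ∈ (0,1) be fixed. Then the following are equivalent: (i) for every p ∈ (0,1), both amplification conditions hold, namely (λ ≥ p → (1−λ)/(λ(1−p)) > 1 ∧ 1/(1−p) > 1) and (λ < p → λ/((1−λ)p) > 1 ∧ 1/p > 1); (ii) λ = 1/2. -/
theorem stmt_8 (l : ℝ) (hl : 0 < l) (hl1 : l < 1) :
    (∀ p : ℝ, 0 < p → p < 1 →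
      (p ≤ l → (1 - l) / (l * (1 - p)) > 1 ∧ 1 / (1 - p) > 1) ∧
      (l < p → l / ((1 - l) * p) > 1 ∧ 1 / p > 1)) ↔
    l = 1 / 2 := by
  have h1l : (0:ℝ) < 1 - l := by linarith
  constructor
  · intro h
    by_contra hne
    rcases lt_or_gt_of_ne hne with hlt | hgt
    · -- l < 1/2, pick p = (l/(1-l)+1)/2
      set p := (l/(1-l) + 1)/2 with hp
      have hq1 : l/(1-l) < 1 := by rw [div_lt_one h1l]; linarith
      have hq0 : 0 < l/(1-l) := div_pos hl h1l
      have hql : l < l/(1-l) := by rw [lt_div_iff₀ h1l]; nlinarith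
      have hp0 : 0 < p := by positivity
      have hp1 : p < 1 := by rw [hp]; linarith
      have hlp : l < p := by rw [hp]; linarith
      have hgood := ((h p hp0 hp1).2 hlp).1
      have hden : 0 < (1 - l) * p := by positivity
      rw [gt_iff_lt, lt_div_iff₀ hden] at hgood
      -- hgood : 1 * ((1-l)*p) < l, but (1-l)*p ≥ l since p ≥ l/(1-l)
      have : l/(1-l) ≤ p := by rw [hp]; linarith
      rw [div_le_iff₀ h1l] at this
      nlinarith
    · -- l > 1/2, pick p = (2l-1)/(2l)
      set p := (2*l - 1)/(2*l) with hp
      have hp0 : 0 < p := by apply div_pos <;> linarith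
      have hpl : p < l := by rw [hp, div_lt_iff₀ (by linarith : (0:ℝ) < 2*l)]; nlinarith
      have hp1 : p < 1 := by linarith
      have hgood := ((h p hp0 hp1).1 (le_of_lt hpl)).1
      have hden : 0 < l * (1 - p) := by nlinarith
      rw [gt_iff_lt, lt_div_iff₀ hden] at hgood
      have hlp : l * p = l - 1/2 := by
        rw [hp]; field_simp
      nlinarith
  · intro hl2
    subst hl2
    intro p hp0 hp1
    constructor
    · intro hpl
      constructor
      · rw [gt_iff_lt, lt_div_iff₀ (by nlinarith : (0:ℝ) < 1/2 * (1 - p))]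
        nlinarith
      · rw [gt_iff_lt, lt_div_iff₀ (by linarith : (0:ℝ) < 1 - p)]
        linarith
    · intro hlp
      constructor
      · rw [gt_iff_lt, lt_div_iff₀ (by nlinarith : (0:ℝ) < (1 - 1/2) * p)]
        nlinarith
      · rw [gt_iff_lt, lt_div_iff₀ hp0]; linarith
end

section
/- Let p ∈ (0,1). If λ ∈ (0,1) satisfies both λ < 1/(2−p) whenever λ ≥ p, and λ > p/(1+p) whenever λ < p, and this holds simultaneously for all p ∈ (0,1) (with λ constant), then λ = 1/2. -/
/-! Both inequalities are strict, and each fails at a well-chosen `p`: for `l < 1/2` take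
`p = l/(1-l)`, where `p/(1+p) = l`; for `l > 1/2` take `p = 2 - 1/l`, where `1/(2-p) = l`. -/

lemma exists_div_one_add_eq_of_lt_half {l : ℝ} (hl : 0 < l) (hl2 : l < 1 / 2) :
    ∃ p : ℝ, 0 < p ∧ p < 1 ∧ l < p ∧ p / (1 + p) = l := by
  have h1l : 0 < 1 - l := by linarith
  refine ⟨l / (1 - l), div_pos hl h1l, ?_, ?_, ?_⟩
  · rw [div_lt_one h1l]; linarith
  · rw [lt_div_iff₀ h1l]; nlinarith
  · field_simp; ring

lemma exists_one_div_two_sub_eq_of_half_lt {l : ℝ} (hl2 : 1 / 2 < l) (hl1 : l < 1) :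
    ∃ p : ℝ, 0 < p ∧ p < 1 ∧ p ≤ l ∧ 1 / (2 - p) = l := by
  have hl : 0 < l := by linarith
  refine ⟨2 - 1 / l, ?_, ?_, ?_, by simp⟩
  · rw [sub_pos, div_lt_iff₀ hl]; linarith
  · rw [sub_lt_comm, lt_div_iff₀ hl]; linarith
  · rw [sub_le_comm, le_div_iff₀ hl]; nlinarith [sq_nonneg (l - 1)]

theorem stmt_9 (l : ℝ) (hl : 0 < l) (hl1 : l < 1)
    (h : ∀ p : ℝ, 0 < p → p < 1 →
      (p ≤ l → l < 1 / (2 - p)) ∧ (l < p → l > p / (1 + p))) :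
    l = 1 / 2 := by
  rcases lt_trichotomy l (1 / 2) with hlt | heq | hgt
  · obtain ⟨p, hp0, hp1, hlp, hpl⟩ := exists_div_one_add_eq_of_lt_half hl hlt
    have := (h p hp0 hp1).2 hlp
    rw [hpl] at this
    exact absurd this (lt_irrefl l)
  · exact heq
  · obtain ⟨p, hp0, hp1, hpl, hlp⟩ := exists_one_div_two_sub_eq_of_half_lt hgt hl1
    have := (h p hp0 hp1).1 hpl
    rw [hlp] at this
    exact absurd this (lt_irrefl l)
end
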